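/- With c_i, c_j > 0 and the transformation p_j = c_j·p̂_j, v_{i,j} = v̂_{i,j}/c_i, r_{i,j} = c_j·r̂_{i,j}, m_{i,j} = c_j·m̂_{i,j}: a feasible matching μ̂ = μ is stable under generalized utilities û_{i,j}(p̂_j) = v̂_{i,j} - c_i c_j p̂_j (for p̂_j < m̂_{i,j}, else -∞) if and only if it is stable under standard utilities u_{i,j}(p_j) = v_{i,j} - p_j (for p_j < m_{i,j}, else -∞). Moreover û_i = c_i · u_i for each bidder i. -/

import Mathlib

open scoped Classical

noncomputable section

variable {I J : Type*}

/-- Generalized utility `u_{i,j}(p_j) = v_{i,j} - c_i · c_j · p_j` if `p_j < m_{i,j}`, and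
`-∞` otherwise. Standard utilities correspond to `c_i = c_j = 1`. -/
def gutil (v : I → J → ℝ) (m : I → J → EReal) (ci : I → ℝ) (cj : J → ℝ) (p : J → ℝ)
    (i : I) (j : J) : EReal :=
  if (p j : EReal) < m i j then ((v i j - ci i * cj j * p j : ℝ) : EReal) else ⊥

/-- Utility of bidder `i` under matching `μ` (dummy item `j0` gives utility 0), for an
abstract utility function `utilF`. -/
def gbidderU (utilF : (J → ℝ) → I → J → EReal) (j0 : J) (μ : I → J) (p : J → ℝ)
    (i : I) : EReal :=
  if μ i = j0 then 0 else utilF p i (μ i)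

/-- Feasibility for an abstract utility function: `μ` is a matching, utilities are
nonnegative, prices are nonnegative with the dummy item priced at `0`, and
`r_{i,j} ≤ p_j < m_{i,j}` on matched pairs. -/
def GFeasible (utilF : (J → ℝ) → I → J → EReal) (r : I → J → ℝ) (m : I → J → EReal)
    (j0 : J) (μ : I → J) (p : J → ℝ) : Prop :=
  (∀ i i', μ i = μ i' → μ i ≠ j0 → i = i') ∧
  (∀ i, 0 ≤ gbidderU utilF j0 μ p i) ∧
  p j0 = 0 ∧ (∀ j, 0 ≤ p j) ∧
  (∀ i, r i (μ i) ≤ p (μ i) ∧ (p (μ i) : EReal) < m i (μ i))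

/-- Stability: feasibility plus `u_i ≥ u_{i,j}(p_j)` for all bidder-item pairs. -/
def GStable (utilF : (J → ℝ) → I → J → EReal) (r : I → J → ℝ) (m : I → J → EReal)
    (j0 : J) (μ : I → J) (p : J → ℝ) : Prop :=
  GFeasible utilF r m j0 μ p ∧ ∀ i j, utilF p i j ≤ gbidderU utilF j0 μ p i

/-- Bidder optimality: stable, and every bidder weakly prefers it to every stable
matching. -/
def GBidderOptimal (utilF : (J → ℝ) → I → J → EReal) (r : I → J → ℝ)
    (m : I → J → EReal) (j0 : J) (μ : I → J) (p : J → ℝ) : Prop :=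
  GStable utilF r m j0 μ p ∧
    ∀ μ' p', GStable utilF r m j0 μ' p' →
      ∀ i, gbidderU utilF j0 μ' p' i ≤ gbidderU utilF j0 μ p i

/-!
Substituting `p_j = c_j p̂_j` turns `v̂_{i,j} - c_i c_j p̂_j` into `c_i (v_{i,j} - p_j)` and the
reserve and cap conditions `r̂ ≤ p̂ < m̂` into `r ≤ p < m`, so every utility of bidder `i`,
including that of the dummy item, is rescaled by the same factor `c_i > 0`. Multiplication by
a positive real is strictly monotone on `EReal` (it fixes `⊥`), so each feasibility and
stability inequality holds before the substitution iff it holds after it.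
-/

lemma EReal.strictMono_coe_mul_left {c : ℝ} (hc : 0 < c) :
    StrictMono fun x : EReal => (c : EReal) * x := by
  have hcancel : ∀ x : EReal, ((c⁻¹ : ℝ) : EReal) * ((c : EReal) * x) = x := fun x => by
    rw [← mul_assoc, ← EReal.coe_mul, inv_mul_cancel₀ hc.ne', EReal.coe_one, one_mul]
  refine Monotone.strictMono_of_injective
    (fun x y hxy => mul_le_mul_of_nonneg_left hxy (EReal.coe_nonneg.2 hc.le)) fun x y hxy => ?_
  rw [← hcancel x, ← hcancel y]
  exact congrArg _ hxy

lemma gutil_eq_coe_mul_gutil_rescaled (vh : I → J → ℝ) (mh : I → J → EReal)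
    (ci : I → ℝ) (cj : J → ℝ) (hci : ∀ i, 0 < ci i) (hcj : ∀ j, 0 < cj j) (ph : J → ℝ)
    (i : I) (j : J) :
    gutil vh mh ci cj ph i j =
      (ci i : EReal) *
        gutil (fun i j => vh i j / ci i) (fun i j => (cj j : EReal) * mh i j)
          (fun _ => 1) (fun _ => 1) (fun j => cj j * ph j) i j := by
  have hcap :
      ((cj j * ph j : ℝ) : EReal) < (cj j : EReal) * mh i j ↔ (ph j : EReal) < mh i j := by
    rw [EReal.coe_mul]
    exact (EReal.strictMono_coe_mul_left (hcj j)).lt_iff_lt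
  simp only [gutil, hcap]
  split
  · rw [← EReal.coe_mul]
    congr 1
    field_simp [(hci i).ne']
  · exact (EReal.coe_mul_bot_of_pos (hci i)).symm

section Rescaling

variable {u u' : (J → ℝ) → I → J → EReal} {c : I → ℝ} {d : J → ℝ} {p : J → ℝ} {j0 : J}
  {μ : I → J}

lemma gbidderU_eq_coe_mul {i : I}
    (hu : ∀ j, u p i j = (c i : EReal) * u' (fun j => d j * p j) i j) :
    gbidderU u j0 μ p i = (c i : EReal) * gbidderU u' j0 μ (fun j => d j * p j) i := by
  unfold gbidderU
  split
  · rw [mul_zero]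
  · exact hu (μ i)

variable (hc : ∀ i, 0 < c i) (hd : ∀ j, 0 < d j)
  (hu : ∀ i j, u p i j = (c i : EReal) * u' (fun j => d j * p j) i j)
include hc hd hu

lemma gFeasible_iff_of_rescale (r : I → J → ℝ) (m : I → J → EReal) :
    GFeasible u r m j0 μ p ↔
      GFeasible u' (fun i j => d j * r i j) (fun i j => (d j : EReal) * m i j) j0 μ
        (fun j => d j * p j) := by
  have hutil_nonneg : ∀ i, 0 ≤ gbidderU u j0 μ p i ↔
      0 ≤ gbidderU u' j0 μ (fun j => d j * p j) i := fun i => by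
    rw [gbidderU_eq_coe_mul (hu i)]
    simpa only [mul_zero] using (EReal.strictMono_coe_mul_left (hc i)).le_iff_le (a := 0)
  have hprice_zero : p j0 = 0 ↔ d j0 * p j0 = 0 := by simp [(hd j0).ne']
  have hprice_nonneg : ∀ j, 0 ≤ p j ↔ 0 ≤ d j * p j := fun j => by
    rw [mul_nonneg_iff_of_pos_left (hd j)]
  have hreserve : ∀ i j, r i j ≤ p j ↔ d j * r i j ≤ d j * p j := fun i j =>
    (mul_le_mul_iff_right₀ (hd j)).symm
  have hcap : ∀ i j, (p j : EReal) < m i j ↔ ((d j * p j : ℝ) : EReal) < (d j : EReal) * m i j :=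
    fun i j => by
      rw [EReal.coe_mul]
      exact (EReal.strictMono_coe_mul_left (hd j)).lt_iff_lt.symm
  unfold GFeasible
  simp only [hutil_nonneg, hprice_zero, hprice_nonneg, hreserve, hcap]

lemma gStable_iff_of_rescale (r : I → J → ℝ) (m : I → J → EReal) :
    GStable u r m j0 μ p ↔
      GStable u' (fun i j => d j * r i j) (fun i j => (d j : EReal) * m i j) j0 μ
        (fun j => d j * p j) := by
  have hblocking : ∀ i j, u p i j ≤ gbidderU u j0 μ p i ↔
      u' (fun j => d j * p j) i j ≤ gbidderU u' j0 μ (fun j => d j * p j) i := fun i j => by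
    rw [hu i j, gbidderU_eq_coe_mul (hu i)]
    exact (EReal.strictMono_coe_mul_left (hc i)).le_iff_le
  unfold GStable
  rw [gFeasible_iff_of_rescale hc hd hu]
  simp only [hblocking]

end Rescaling

theorem stable_transform_general (vh rh : I → J → ℝ) (mh : I → J → EReal)
    (ci : I → ℝ) (cj : J → ℝ) (hci : ∀ i, 0 < ci i) (hcj : ∀ j, 0 < cj j)
    (j0 : J) (μ : I → J) (ph : J → ℝ) :
    (GStable (gutil vh mh ci cj) rh mh j0 μ ph ↔
      GStable
        (gutil (fun i j => vh i j / ci i) (fun i j => (cj j : EReal) * mh i j)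
          (fun _ => 1) (fun _ => 1))
        (fun i j => cj j * rh i j) (fun i j => (cj j : EReal) * mh i j)
        j0 μ (fun j => cj j * ph j)) ∧
    (∀ i, gbidderU (gutil vh mh ci cj) j0 μ ph i =
      (ci i : EReal) *
        gbidderU
          (gutil (fun i j => vh i j / ci i) (fun i j => (cj j : EReal) * mh i j)
            (fun _ => 1) (fun _ => 1))
          j0 μ (fun j => cj j * ph j) i) := by
  have hu := gutil_eq_coe_mul_gutil_rescaled vh mh ci cj hci hcj ph
  exact ⟨gStable_iff_of_rescale hci hcj hu rh mh, fun i => gbidderU_eq_coe_mul (hu i)⟩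

/-- a feasible matching `μ̂ = μ` is stable under generalized utilities
`v̂_{i,j} - c_i c_j p̂_j` (with data `(v̂, r̂, m̂)` and prices `p̂`) iff it is stable under
standard utilities with the transformed data `(v̂_{i,j}/c_i, c_j r̂_{i,j}, c_j m̂_{i,j})` and
prices `p_j = c_j p̂_j`; moreover `û_i = c_i · u_i` for every bidder. -/
theorem stable_transform (vh rh : I → J → ℝ) (mh : I → J → EReal)
    (ci : I → ℝ) (cj : J → ℝ) (hci : ∀ i, 0 < ci i) (hcj : ∀ j, 0 < cj j)
    (j0 : J) (μ : I → J) (ph : J → ℝ)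
    (hfeas : GFeasible (gutil vh mh ci cj) rh mh j0 μ ph) :
    (GStable (gutil vh mh ci cj) rh mh j0 μ ph ↔
      GStable
        (gutil (fun i j => vh i j / ci i) (fun i j => (cj j : EReal) * mh i j)
          (fun _ => 1) (fun _ => 1))
        (fun i j => cj j * rh i j) (fun i j => (cj j : EReal) * mh i j)
        j0 μ (fun j => cj j * ph j)) ∧
    (∀ i, gbidderU (gutil vh mh ci cj) j0 μ ph i =
      (ci i : EReal) *
        gbidderU
          (gutil (fun i j => vh i j / ci i) (fun i j => (cj j : EReal) * mh i j)
            (fun _ => 1) (fun _ => 1))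
          j0 μ (fun j => cj j * ph j) i) :=
  stable_transform_general vh rh mh ci cj hci hcj j0 μ ph
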